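/- (Theorem 2: solving the relaxed problem yields a near-optimal solution of the bilevel problem.) Let z ≥ 0, δ ≥ 0, ε ≥ 0, let φ̂, ŝ : ℝⁿ → ℝ, and set h(λ) = φ̂(λ) + z·ŝ(λ). Suppose: (i) φ(λ) ≤ h(λ) for all λ ∈ ℝⁿ; (ii) (λ*,β*) is a global solution of the relaxed problem, i.e. f(λ*,β*) ≤ h(λ*) and F(β*) ≤ F(β) for every (λ,β) with f(λ,β) ≤ h(λ); (iii) ŝ(λ*) ≤ δ; (iv) |φ(λ*) − φ̂(λ*)| ≤ z·δ; (v) |φ̂(λ*) − f(λ*,β*)| ≤ ε. Then (a) F(β*) ≤ F(β) for every (λ,β) with f(λ,β) ≤ φ(λ), so F(β*) is a lower bound on the optimal value of the original bilevel problem, and (b) f(λ*,β*) ≤ φ(λ*) + z·δ + ε, i.e. (λ*,β*) violates the lower-level optimality constraint by at most z·δ + ε. -/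

import Mathlib

theorem stmt7_general (n m : ℕ) (f : (Fin n → ℝ) → (Fin m → ℝ) → ℝ)
    (F : (Fin m → ℝ) → ℝ)
    (phi : (Fin n → ℝ) → ℝ)
    (z δ ε : ℝ)
    (phiHat : (Fin n → ℝ) → ℝ)
    (h : (Fin n → ℝ) → ℝ)
    (hub : ∀ lam, phi lam ≤ h lam)
    (lamStar : Fin n → ℝ) (betaStar : Fin m → ℝ)
    (hopt : ∀ (lam : Fin n → ℝ) (beta : Fin m → ℝ),
      f lam beta ≤ h lam → F betaStar ≤ F beta)
    (happrox : |phi lamStar - phiHat lamStar| ≤ z * δ)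
    (hC2 : |phiHat lamStar - f lamStar betaStar| ≤ ε) :
    (∀ (lam : Fin n → ℝ) (beta : Fin m → ℝ),
      f lam beta ≤ phi lam → F betaStar ≤ F beta) ∧
    f lamStar betaStar ≤ phi lamStar + z * δ + ε := by
  refine ⟨fun lam beta hle => hopt lam beta (hle.trans (hub lam)), ?_⟩
  calc f lamStar betaStar ≤ phiHat lamStar + ε := by linarith [(abs_sub_le_iff.mp hC2).2]
    _ ≤ phi lamStar + z * δ + ε := by linarith [(abs_sub_le_iff.mp happrox).2]

/-- Theorem 2: a global solution of the relaxed problem at which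
the termination conditions hold is a lower bound on the original bilevel
problem and is near-feasible for the lower-level optimality constraint. -/
theorem stmt7 (n m : ℕ) (f : (Fin n → ℝ) → (Fin m → ℝ) → ℝ)
    (F : (Fin m → ℝ) → ℝ)
    (hbdd : ∀ lam : Fin n → ℝ, BddBelow (Set.range (f lam)))
    (phi : (Fin n → ℝ) → ℝ) (hphi : ∀ lam, phi lam = ⨅ b, f lam b)
    (z δ ε : ℝ) (hz : 0 ≤ z) (hδ : 0 ≤ δ) (hε : 0 ≤ ε)
    (phiHat sHat : (Fin n → ℝ) → ℝ)
    (h : (Fin n → ℝ) → ℝ) (hdef : ∀ lam, h lam = phiHat lam + z * sHat lam)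
    (hub : ∀ lam, phi lam ≤ h lam)
    (lamStar : Fin n → ℝ) (betaStar : Fin m → ℝ)
    (hfeas : f lamStar betaStar ≤ h lamStar)
    (hopt : ∀ (lam : Fin n → ℝ) (beta : Fin m → ℝ),
      f lam beta ≤ h lam → F betaStar ≤ F beta)
    (hC1 : sHat lamStar ≤ δ)
    (happrox : |phi lamStar - phiHat lamStar| ≤ z * δ)
    (hC2 : |phiHat lamStar - f lamStar betaStar| ≤ ε) :
    (∀ (lam : Fin n → ℝ) (beta : Fin m → ℝ),
      f lam beta ≤ phi lam → F betaStar ≤ F beta) ∧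
    f lamStar betaStar ≤ phi lamStar + z * δ + ε :=
  stmt7_general n m f F phi z δ ε phiHat h hub lamStar betaStar hopt happrox hC2
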